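/- For R > max{1, |λ|} (λ ∈ ℂ⁺ fixed) and all η > R: ∫_{-∞}^{+∞} |log(ξ + iη) - log λ|⁻² |ξ + iη|⁻¹ dξ ≤ C(λ, R) for a constant independent of η; moreover ‖(log(·+iη) - log λ)⁻¹ (·+iη)^{-1/2}; L²(ℝ)‖ → 0 as η → +∞. -/

import Mathlib

open Complex MeasureTheory Set Filter
open scoped Topology ENNReal

lemma tail_lintegral (c η : ℝ) (hη : 0 < η) (hc : c < Real.log η) :
    ∫⁻ ξ in Ioi η, ENNReal.ofReal (((Real.log ξ - c) ^ 2 * ξ)⁻¹)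
      = ENNReal.ofReal ((Real.log η - c)⁻¹) := by
  set F : ℝ → ℝ := fun x => -(Real.log x - c)⁻¹ with hF
  set G : ℝ → ℝ := fun x => ((Real.log x - c) ^ 2 * x)⁻¹ with hG
  have hlog : ∀ x : ℝ, η ≤ x → c < Real.log x := fun x hx =>
    lt_of_lt_of_le hc (Real.log_le_log hη hx)
  have hderiv : ∀ x ∈ Ioi η, HasDerivAt F (G x) x := by
    intro x hx
    have hx0 : 0 < x := lt_trans hη hx
    have hne : Real.log x - c ≠ 0 := sub_ne_zero.2 (ne_of_gt (hlog x hx.le))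
    have h1 : HasDerivAt (fun y : ℝ => Real.log y - c) x⁻¹ x :=
      (Real.hasDerivAt_log hx0.ne').sub_const c
    have h2 := (h1.inv hne).neg
    have h3 : G x = -(-x⁻¹ / (Real.log x - c) ^ 2) := by
      rw [hG]
      field_simp
    rw [h3]
    exact h2
  have hcont : ContinuousWithinAt F (Ici η) η := by
    have hne : Real.log η - c ≠ 0 := sub_ne_zero.2 (ne_of_gt hc)
    have : ContinuousAt F η := by
      have h1 : ContinuousAt (fun y : ℝ => Real.log y - c) η :=
        (Real.continuousAt_log hη.ne').sub continuousAt_const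
      exact (h1.inv₀ hne).neg
    exact this.continuousWithinAt
  have htend : Tendsto F atTop (𝓝 0) := by
    have h1 : Tendsto (fun x : ℝ => Real.log x - c) atTop atTop := by
      simpa [sub_eq_add_neg] using tendsto_atTop_add_const_right atTop (-c) Real.tendsto_log_atTop
    have := h1.inv_tendsto_atTop.neg
    simpa using this
  have hpos : ∀ x ∈ Ioi η, 0 ≤ G x := by
    intro x hx
    have hx0 : (0:ℝ) ≤ x := (lt_trans hη hx).le
    positivity
  have hint : IntegrableOn G (Ioi η) :=
    integrableOn_Ioi_deriv_of_nonneg hcont hderiv hpos htend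
  have hval : ∫ x in Ioi η, G x = 0 - F η :=
    integral_Ioi_of_hasDerivAt_of_nonneg hcont hderiv hpos htend
  rw [← ofReal_integral_eq_lintegral_ofReal hint
    ((ae_restrict_iff' measurableSet_Ioi).2 (Filter.Eventually.of_forall hpos))]
  rw [hval]
  simp [hF]

lemma key_bound (l : ℂ) (z : ℂ) (a b : ℝ) (ha : 0 < a) (hb : 0 < b)
    (hra : a ≤ Real.log (‖z‖) - Real.log (‖l‖))
    (hrb : b ≤ ‖z‖) :
    (‖Complex.log z - Complex.log l‖ ^ 2 * ‖z‖)⁻¹ ≤ (a ^ 2 * b)⁻¹ := by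
  have h1 : a ≤ ‖Complex.log z - Complex.log l‖ := by
    calc a ≤ Real.log (‖z‖) - Real.log (‖l‖) := hra
    _ ≤ |(Complex.log z - Complex.log l).re| := by
        rw [Complex.sub_re, Complex.log_re, Complex.log_re]
        exact le_abs_self _
    _ ≤ ‖Complex.log z - Complex.log l‖ := Complex.abs_re_le_norm _
  have h2 : a ^ 2 * b ≤ ‖Complex.log z - Complex.log l‖ ^ 2 * ‖z‖ :=
    mul_le_mul (pow_le_pow_left₀ ha.le h1 2) hrb hb.le (sq_nonneg _)
  exact inv_anti₀ (by positivity) h2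

lemma main_bound (l : ℂ) (hl : 0 < l.im) (η : ℝ) (hη : max 1 (‖l‖) < η) :
    (∫⁻ ξ : ℝ, ENNReal.ofReal
        ((‖Complex.log ((ξ : ℂ) + η * Complex.I) - Complex.log l‖ ^ 2
          * ‖(ξ : ℂ) + η * Complex.I‖)⁻¹))
      ≤ ENNReal.ofReal (2 / (Real.log η - Real.log (‖l‖)) ^ 2
          + 2 / (Real.log η - Real.log (‖l‖))) := by
  set c : ℝ := Real.log (‖l‖) with hc
  set d : ℝ := Real.log η - c with hdd
  set F : ℝ → ℝ≥0∞ := fun ξ => ENNReal.ofReal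
      ((‖Complex.log ((ξ : ℂ) + η * Complex.I) - Complex.log l‖ ^ 2
        * ‖(ξ : ℂ) + η * Complex.I‖)⁻¹) with hFdef
  have hl0 : l ≠ 0 := by intro h; rw [h] at hl; simp at hl
  have habs : 0 < ‖l‖ := norm_pos_iff.mpr hl0
  have hη1 : (1:ℝ) < η := lt_of_le_of_lt (le_max_left _ _) hη
  have hηl : ‖l‖ < η := lt_of_le_of_lt (le_max_right _ _) hη
  have hη0 : (0:ℝ) < η := lt_trans one_pos hη1
  have hcd : c < Real.log η := Real.log_lt_log habs hηl
  have hd : 0 < d := sub_pos.2 hcd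
  have him : ∀ ξ : ℝ, η ≤ ‖(ξ : ℂ) + η * Complex.I‖ := by
    intro ξ
    have h := Complex.abs_im_le_norm ((ξ : ℂ) + η * Complex.I)
    simp only [Complex.add_im, Complex.ofReal_im, Complex.mul_im, Complex.ofReal_re,
      Complex.I_im, Complex.I_re, mul_one, mul_zero, add_zero, zero_add] at h
    exact le_trans (le_abs_self η) h
  have hre : ∀ ξ : ℝ, |ξ| ≤ ‖(ξ : ℂ) + η * Complex.I‖ := by
    intro ξ
    have h := Complex.abs_re_le_norm ((ξ : ℂ) + η * Complex.I)
    simp only [Complex.add_re, Complex.ofReal_re, Complex.mul_re, Complex.ofReal_im,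
      Complex.I_re, Complex.I_im, mul_zero, mul_one, zero_mul, sub_zero, zero_sub, add_zero,
      zero_add, neg_zero] at h
    simpa using h
  have loga : ∀ ξ : ℝ, d ≤ Real.log (‖(ξ : ℂ) + η * Complex.I‖) - c :=
    fun ξ => sub_le_sub_right (Real.log_le_log hη0 (him ξ)) c
  have hcompl : (Icc (-η) η)ᶜ = Iio (-η) ∪ Ioi η := by
    ext x; simp only [mem_compl_iff, mem_Icc, mem_union, mem_Iio, mem_Ioi, not_and_or, not_le]
  have hdisj : Disjoint (Iio (-η)) (Ioi η) := by
    apply Set.disjoint_left.2; intro x h1 h2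
    simp only [mem_Iio, mem_Ioi] at *; linarith
  have hsplit : ∫⁻ ξ : ℝ, F ξ
      = (∫⁻ ξ in Icc (-η) η, F ξ) + ((∫⁻ ξ in Iio (-η), F ξ) + ∫⁻ ξ in Ioi η, F ξ) := by
    rw [← lintegral_add_compl F (measurableSet_Icc : MeasurableSet (Icc (-η) η)), hcompl,
      lintegral_union measurableSet_Ioi hdisj]
  have hA : ∫⁻ ξ in Icc (-η) η, F ξ ≤ ENNReal.ofReal (2 / d ^ 2) := by
    calc ∫⁻ ξ in Icc (-η) η, F ξ
        ≤ ∫⁻ _ in Icc (-η) η, ENNReal.ofReal ((d ^ 2 * η)⁻¹) :=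
          setLIntegral_mono' measurableSet_Icc (fun ξ _ =>
            ENNReal.ofReal_le_ofReal (key_bound l _ d η hd hη0 (loga ξ) (him ξ)))
      _ = ENNReal.ofReal ((d ^ 2 * η)⁻¹) * volume (Icc (-η) η) := setLIntegral_const _ _
      _ = ENNReal.ofReal ((d ^ 2 * η)⁻¹ * (η - -η)) := by
          rw [Real.volume_Icc, ← ENNReal.ofReal_mul (by positivity)]
      _ = ENNReal.ofReal (2 / d ^ 2) := by
          congr 1; field_simp; ring
  have hB : ∫⁻ ξ in Ioi η, F ξ ≤ ENNReal.ofReal (1 / d) := by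
    calc ∫⁻ ξ in Ioi η, F ξ
        ≤ ∫⁻ ξ in Ioi η, ENNReal.ofReal (((Real.log ξ - c) ^ 2 * ξ)⁻¹) := by
          apply setLIntegral_mono' measurableSet_Ioi
          intro ξ hξ
          have hξη : η < ξ := hξ
          have hξ0 : (0:ℝ) < ξ := lt_trans hη0 hξη
          have hξle : ξ ≤ ‖(ξ : ℂ) + η * Complex.I‖ :=
            le_trans (le_abs_self ξ) (hre ξ)
          exact ENNReal.ofReal_le_ofReal (key_bound l _ _ ξ
            (sub_pos.2 (Real.log_lt_log habs (lt_trans hηl hξη))) hξ0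
            (sub_le_sub_right (Real.log_le_log hξ0 hξle) c) hξle)
      _ = ENNReal.ofReal ((Real.log η - c)⁻¹) := tail_lintegral c η hη0 hcd
      _ = ENNReal.ofReal (1 / d) := by rw [one_div]
  have hC : ∫⁻ ξ in Iio (-η), F ξ ≤ ENNReal.ofReal (1 / d) := by
    have step1 : ∫⁻ ξ in Iio (-η), F ξ
        ≤ ∫⁻ ξ in Iio (-η), ENNReal.ofReal (((Real.log (-ξ) - c) ^ 2 * (-ξ))⁻¹) := by
      apply setLIntegral_mono' measurableSet_Iio
      intro ξ hξ
      have hξη : ξ < -η := hξ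
      have h1 : η < -ξ := by linarith
      have h2 : (0:ℝ) < -ξ := by linarith
      have h3 : -ξ ≤ |ξ| := by rw [abs_of_neg (by linarith : ξ < 0)]
      have hξle : -ξ ≤ ‖(ξ : ℂ) + η * Complex.I‖ := le_trans h3 (hre ξ)
      exact ENNReal.ofReal_le_ofReal (key_bound l _ _ (-ξ)
        (sub_pos.2 (Real.log_lt_log habs (lt_trans hηl h1))) h2
        (sub_le_sub_right (Real.log_le_log h2 hξle) c) hξle)
    have step2 : ∫⁻ ξ in Iio (-η), ENNReal.ofReal (((Real.log (-ξ) - c) ^ 2 * (-ξ))⁻¹)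
        = ∫⁻ ξ in Ioi η, ENNReal.ofReal (((Real.log ξ - c) ^ 2 * ξ)⁻¹) := by
      rw [← image_neg_Ioi,
        ← (Measure.measurePreserving_neg (volume : Measure ℝ)).setLIntegral_comp_emb
          (MeasurableEquiv.neg ℝ).measurableEmbedding
          (fun ξ => ENNReal.ofReal (((Real.log (-ξ) - c) ^ 2 * (-ξ))⁻¹)) (Ioi η)]
      simp only [neg_neg]
    calc ∫⁻ ξ in Iio (-η), F ξ
        ≤ ∫⁻ ξ in Ioi η, ENNReal.ofReal (((Real.log ξ - c) ^ 2 * ξ)⁻¹) := step2 ▸ step1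
      _ = ENNReal.ofReal ((Real.log η - c)⁻¹) := tail_lintegral c η hη0 hcd
      _ = ENNReal.ofReal (1 / d) := by rw [one_div]
  calc ∫⁻ ξ : ℝ, F ξ
      = (∫⁻ ξ in Icc (-η) η, F ξ) + ((∫⁻ ξ in Iio (-η), F ξ) + ∫⁻ ξ in Ioi η, F ξ) := hsplit
    _ ≤ ENNReal.ofReal (2 / d ^ 2) + (ENNReal.ofReal (1 / d) + ENNReal.ofReal (1 / d)) :=
        add_le_add hA (add_le_add hC hB)
    _ = ENNReal.ofReal (2 / d ^ 2 + 2 / d) := by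
        rw [← ENNReal.ofReal_add (by positivity) (by positivity),
          ← ENNReal.ofReal_add (by positivity) (by positivity)]
        congr 1; ring

/-- for fixed `λ ∈ ℂ⁺` and any `R > max{1, |λ|}`, the integrals
`∫_ℝ |log(ξ + iη) - log λ|⁻² |ξ + iη|⁻¹ dξ` are bounded uniformly in `η > R`;
moreover the squared `L²(ℝ)` norm of the kernel
`ξ ↦ (log(ξ+iη) - log λ)⁻¹ (ξ+iη)^{-1/2}`, which equals that integral, tends
to `0` as `η → +∞`. -/
theorem stmt8 (l : ℂ) (hl : 0 < l.im) :
    (∀ R : ℝ, max 1 (‖l‖) < R → ∃ C : ℝ, ∀ η : ℝ, R < η →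
      ∫⁻ ξ : ℝ, ENNReal.ofReal
          ((‖Complex.log ((ξ : ℂ) + η * Complex.I) - Complex.log l‖ ^ 2
            * ‖(ξ : ℂ) + η * Complex.I‖)⁻¹)
        ≤ ENNReal.ofReal C) ∧
    Filter.Tendsto (fun η : ℝ =>
        ∫⁻ ξ : ℝ, ENNReal.ofReal
          ((‖Complex.log ((ξ : ℂ) + η * Complex.I) - Complex.log l‖ ^ 2
            * ‖(ξ : ℂ) + η * Complex.I‖)⁻¹))
      Filter.atTop (𝓝 0) := by
  set c : ℝ := Real.log (‖l‖) with hc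
  have hl0 : l ≠ 0 := by intro h; rw [h] at hl; simp at hl
  have habs : 0 < ‖l‖ := norm_pos_iff.mpr hl0
  constructor
  · intro R hR
    have hR1 : (1:ℝ) < R := lt_of_le_of_lt (le_max_left _ _) hR
    have hRl : ‖l‖ < R := lt_of_le_of_lt (le_max_right _ _) hR
    have hR0 : (0:ℝ) < R := lt_trans one_pos hR1
    have hdR : 0 < Real.log R - c := sub_pos.2 (Real.log_lt_log habs hRl)
    refine ⟨2 / (Real.log R - c) ^ 2 + 2 / (Real.log R - c), fun η hη => ?_⟩
    have hmax : max 1 (‖l‖) < η := lt_trans hR hη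
    refine le_trans (main_bound l hl η hmax) (ENNReal.ofReal_le_ofReal ?_)
    have hdle : Real.log R - c ≤ Real.log η - c :=
      sub_le_sub_right (Real.log_le_log hR0 hη.le) c
    gcongr
  · have hdt : Tendsto (fun η : ℝ => Real.log η - c) atTop atTop := by
      simpa [sub_eq_add_neg] using
        tendsto_atTop_add_const_right atTop (-c) Real.tendsto_log_atTop
    have hdsq : Tendsto (fun η : ℝ => (Real.log η - c) ^ 2) atTop atTop := by
      simpa [pow_two] using hdt.atTop_mul_atTop₀ hdt
    have h1 : Tendsto (fun η : ℝ => 2 / (Real.log η - c) ^ 2 + 2 / (Real.log η - c))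
        atTop (𝓝 0) := by
      have ha : Tendsto (fun η : ℝ => 2 / (Real.log η - c) ^ 2) atTop (𝓝 0) :=
        tendsto_const_nhds.div_atTop hdsq
      have hb : Tendsto (fun η : ℝ => 2 / (Real.log η - c)) atTop (𝓝 0) :=
        tendsto_const_nhds.div_atTop hdt
      simpa using ha.add hb
    have h2 : Tendsto (fun η : ℝ =>
        ENNReal.ofReal (2 / (Real.log η - c) ^ 2 + 2 / (Real.log η - c))) atTop (𝓝 0) := by
      simpa using ENNReal.tendsto_ofReal h1
    refine tendsto_of_tendsto_of_tendsto_of_le_of_le' tendsto_const_nhds h2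
      (Filter.Eventually.of_forall fun _ => zero_le) ?_
    filter_upwards [eventually_gt_atTop (max 1 (‖l‖))] with η hη
    exact main_bound l hl η hη
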